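/- Let (α, β) ∈ ℝ². Consider the real representation of the group ℤ² on the 3-dimensional real vector space of purely imaginary quaternions in which (m, n) ∈ ℤ² acts by v ↦ u(2π(mα + nβ))·v·u(2π(mα + nβ))⁻¹. Then the first group cohomology H¹(ℤ²; su(2)) of this representation has real dimension 2 if (α, β) ∉ ((1/2)ℤ)², and real dimension 6 if (α, β) ∈ ((1/2)ℤ)². -/

import Mathlib

open Real

/-- The unit quaternion `cos θ + (sin θ) i`. -/
noncomputable def uq (θ : ℝ) : Quaternion ℝ := ⟨Real.cos θ, Real.sin θ, 0, 0⟩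

lemma uq_mul (θ₁ θ₂ : ℝ) : uq θ₁ * uq θ₂ = uq (θ₁ + θ₂) := by
  ext <;>
    simp only [Quaternion.re_mul, Quaternion.imI_mul, Quaternion.imJ_mul,
      Quaternion.imK_mul] <;>
    simp [uq, Real.cos_add, Real.sin_add] <;> ring

lemma uq_zero : uq 0 = 1 := by
  ext <;> simp [uq, Quaternion.re_one, Quaternion.imI_one, Quaternion.imJ_one, Quaternion.imK_one]

/-- The purely imaginary quaternions, identified with `su(2)`. -/
def imQuat : Submodule ℝ (Quaternion ℝ) where
  carrier := {v | v.re = 0}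
  add_mem' := by intro x y hx hy; simp_all [Set.mem_setOf_eq]
  zero_mem' := by simp [Quaternion.re_zero]
  smul_mem' := by intro c x hx; simp_all [Set.mem_setOf_eq]

lemma conj_re_eq_zero (θ : ℝ) (v : Quaternion ℝ) (hv : v.re = 0) :
    (uq θ * v * uq (-θ)).re = 0 := by
  simp only [Quaternion.re_mul, Quaternion.imI_mul, Quaternion.imJ_mul,
    Quaternion.imK_mul]
  simp only [uq, hv, Real.cos_neg, Real.sin_neg]
  ring

/-- Conjugation by the unit quaternion `u(θ)` as a linear endomorphism of `su(2)`. -/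
noncomputable def conjMap (θ : ℝ) : imQuat →ₗ[ℝ] imQuat where
  toFun v := ⟨uq θ * (v : Quaternion ℝ) * uq (-θ), conj_re_eq_zero θ v v.2⟩
  map_add' x y := by
    apply Subtype.ext
    simp [mul_add, add_mul]
  map_smul' c x := by
    apply Subtype.ext
    simp [Algebra.mul_smul_comm, Algebra.smul_mul_assoc]

lemma conjMap_add (θ₁ θ₂ : ℝ) : conjMap (θ₁ + θ₂) = conjMap θ₁ ∘ₗ conjMap θ₂ := by
  refine LinearMap.ext fun v => Subtype.ext ?_
  simp only [conjMap, LinearMap.coe_mk, AddHom.coe_mk, LinearMap.coe_comp,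
    Function.comp_apply]
  rw [← uq_mul θ₁ θ₂, show (-(θ₁ + θ₂)) = (-θ₂) + (-θ₁) from by ring, ← uq_mul]
  simp [mul_assoc]

/-- The angle by which `(m, n) ∈ ℤ²` acts, namely `2π(mα + nβ)`. -/
noncomputable def angleOf (α β : ℝ) (g : Multiplicative (ℤ × ℤ)) : ℝ :=
  2 * π * (((Multiplicative.toAdd g).1 : ℝ) * α + ((Multiplicative.toAdd g).2 : ℝ) * β)

lemma angleOf_mul (α β : ℝ) (g h : Multiplicative (ℤ × ℤ)) :
    angleOf α β (g * h) = angleOf α β g + angleOf α β h := by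
  simp only [angleOf, toAdd_mul, Prod.fst_add, Prod.snd_add]
  push_cast
  ring

/-- The adjoint representation of `ℤ²` on `su(2)` in which `(m, n)` acts by conjugation
by the unit quaternion `u(2π(mα + nβ))`. -/
noncomputable def conjRep (α β : ℝ) :
    Representation ℝ (Multiplicative (ℤ × ℤ)) imQuat where
  toFun g := conjMap (angleOf α β g)
  map_one' := by
    refine LinearMap.ext fun v => Subtype.ext ?_
    simp [conjMap, angleOf, uq_zero]
  map_mul' g h := by
    show conjMap (angleOf α β (g * h)) = conjMap (angleOf α β g) * conjMap (angleOf α β h)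
    rw [angleOf_mul]
    exact conjMap_add _ _


-- ===== auxiliary development =====
lemma conj_imI (θ : ℝ) (v : Quaternion ℝ) (hv : v.re = 0) :
    (uq θ * v * uq (-θ)).imI = v.imI := by
  have hc := Real.sin_sq_add_cos_sq θ
  simp only [Quaternion.imI_mul, Quaternion.re_mul, Quaternion.imJ_mul, Quaternion.imK_mul]
  simp only [uq,
    Real.cos_neg, Real.sin_neg, hv]
  linear_combination v.imI * hc

lemma conj_imJ (θ : ℝ) (v : Quaternion ℝ) (hv : v.re = 0) :
    (uq θ * v * uq (-θ)).imJ = Real.cos (2*θ) * v.imJ - Real.sin (2*θ) * v.imK := by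
  have hc := Real.sin_sq_add_cos_sq θ
  simp only [Quaternion.imI_mul, Quaternion.re_mul, Quaternion.imJ_mul, Quaternion.imK_mul]
  simp only [uq,
    Real.cos_neg, Real.sin_neg, hv, Real.cos_two_mul, Real.sin_two_mul]
  linear_combination (-v.imJ) * hc

lemma conj_imK (θ : ℝ) (v : Quaternion ℝ) (hv : v.re = 0) :
    (uq θ * v * uq (-θ)).imK = Real.sin (2*θ) * v.imJ + Real.cos (2*θ) * v.imK := by
  have hc := Real.sin_sq_add_cos_sq θ
  simp only [Quaternion.imI_mul, Quaternion.re_mul, Quaternion.imJ_mul, Quaternion.imK_mul]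
  simp only [uq,
    Real.cos_neg, Real.sin_neg, hv, Real.cos_two_mul, Real.sin_two_mul]
  linear_combination (-v.imK) * hc

-- the linear equivalence with ℝ × ℂ
@[simps]
noncomputable def eIm : imQuat ≃ₗ[ℝ] ℝ × ℂ where
  toFun v := ((v : Quaternion ℝ).imI, ⟨(v : Quaternion ℝ).imJ, (v : Quaternion ℝ).imK⟩)
  invFun p := ⟨⟨0, p.1, p.2.re, p.2.im⟩, rfl⟩
  map_add' x y := by
    refine Prod.ext (by simp) (Complex.ext ?_ ?_) <;> simp
  map_smul' c x := by
    refine Prod.ext (by simp) (Complex.ext ?_ ?_) <;> simp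
  left_inv v := by
    apply Subtype.ext
    ext
    · exact v.2.symm
    all_goals rfl
  right_inv p := by ext <;> rfl

lemma coe_conjMap (θ : ℝ) (v : imQuat) :
    (conjMap θ v : Quaternion ℝ) = uq θ * (v : Quaternion ℝ) * uq (-θ) := rfl

lemma eIm_conjMap (θ : ℝ) (v : imQuat) :
    eIm (conjMap θ v) = ((eIm v).1, Complex.exp ((2*θ : ℝ) * Complex.I) * (eIm v).2) := by
  have h : (v : Quaternion ℝ).re = 0 := v.2
  refine Prod.ext ?_ (Complex.ext ?_ ?_) <;>
    simp only [eIm_apply, coe_conjMap, conj_imI θ _ h, conj_imJ θ _ h, conj_imK θ _ h,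
      Complex.mul_re, Complex.mul_im, Complex.exp_ofReal_mul_I_re, Complex.exp_ofReal_mul_I_im] <;>
  ring

lemma finrank_imQuat : Module.finrank ℝ imQuat = 3 := by
  rw [eIm.finrank_eq]
  simp [Module.finrank_prod, Complex.finrank_real_complex]

noncomputable instance : FiniteDimensional ℝ imQuat := Module.Finite.equiv eIm.symm

open Module LinearMap

lemma eIm_symm_apply (t : ℝ) (z : ℂ) :
    ((eIm.symm (t, z) : imQuat) : Quaternion ℝ) = ⟨0, t, z.re, z.im⟩ := rfl

noncomputable def cc : imQuat →ₗ[ℝ] ℂ := (LinearMap.snd ℝ ℝ ℂ) ∘ₗ eIm.toLinearMap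
noncomputable def ac : imQuat →ₗ[ℝ] ℝ := (LinearMap.fst ℝ ℝ ℂ) ∘ₗ eIm.toLinearMap

lemma cc_apply (v : imQuat) : cc v = (eIm v).2 := rfl
lemma ac_apply (v : imQuat) : ac v = (eIm v).1 := rfl

lemma cc_conjMap (θ : ℝ) (v : imQuat) :
    cc (conjMap θ v) = Complex.exp ((2*θ : ℝ) * Complex.I) * cc v := by
  rw [cc_apply, eIm_conjMap]; rfl

lemma ac_conjMap (θ : ℝ) (v : imQuat) : ac (conjMap θ v) = ac v := by
  rw [ac_apply, eIm_conjMap]; rfl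

lemma imQuat_ext {v w : imQuat} (h1 : ac v = ac w) (h2 : cc v = cc w) : v = w := by
  apply eIm.injective
  exact Prod.ext h1 h2

lemma ac_symm (t : ℝ) (z : ℂ) : ac (eIm.symm (t, z)) = t := by
  rw [ac_apply, eIm.apply_symm_apply]

lemma cc_symm (t : ℝ) (z : ℂ) : cc (eIm.symm (t, z)) = z := by
  rw [cc_apply, eIm.apply_symm_apply]

lemma range_ac : LinearMap.range ac = ⊤ := by
  rw [eq_top_iff]
  rintro t -
  exact ⟨eIm.symm (t, 0), ac_symm t 0⟩

lemma range_cc : LinearMap.range cc = ⊤ := by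
  rw [eq_top_iff]
  rintro z -
  exact ⟨eIm.symm (0, z), cc_symm 0 z⟩

lemma finrank_ker_ac : finrank ℝ (LinearMap.ker ac) = 2 := by
  have h := ac.finrank_range_add_finrank_ker
  rw [range_ac, finrank_top, finrank_imQuat, Module.finrank_self] at h
  omega

lemma finrank_ker_cc : finrank ℝ (LinearMap.ker cc) = 1 := by
  have h := cc.finrank_range_add_finrank_ker
  rw [range_cc, finrank_top, finrank_imQuat, Complex.finrank_real_complex] at h
  omega

lemma conjMap_eq_id {θ : ℝ} (h : Complex.exp ((2*θ : ℝ) * Complex.I) = 1) :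
    conjMap θ = LinearMap.id := by
  refine LinearMap.ext fun v => imQuat_ext ?_ ?_
  · rw [ac_conjMap]; rfl
  · rw [cc_conjMap, h, one_mul]; rfl

/-- The "cocycle condition" map. -/
noncomputable def Mm (θ₁ θ₂ : ℝ) : imQuat × imQuat →ₗ[ℝ] imQuat :=
  (conjMap θ₁ - LinearMap.id) ∘ₗ LinearMap.snd ℝ imQuat imQuat -
    (conjMap θ₂ - LinearMap.id) ∘ₗ LinearMap.fst ℝ imQuat imQuat

/-- The "coboundary" map. -/
noncomputable def Dm (θ₁ θ₂ : ℝ) : imQuat →ₗ[ℝ] imQuat × imQuat :=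
  LinearMap.prod (conjMap θ₁ - LinearMap.id) (conjMap θ₂ - LinearMap.id)

lemma Mm_apply (θ₁ θ₂ : ℝ) (x y : imQuat) :
    Mm θ₁ θ₂ (x, y) = conjMap θ₁ y - y - (conjMap θ₂ x - x) := rfl

lemma Dm_apply (θ₁ θ₂ : ℝ) (v : imQuat) :
    Dm θ₁ θ₂ v = (conjMap θ₁ v - v, conjMap θ₂ v - v) := rfl

lemma range_Mm (θ₁ θ₂ : ℝ) (h : Complex.exp ((2*θ₁ : ℝ) * Complex.I) ≠ 1) :
    LinearMap.range (Mm θ₁ θ₂) = LinearMap.ker ac := by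
  apply le_antisymm
  · rintro - ⟨⟨x, y⟩, rfl⟩
    rw [LinearMap.mem_ker, Mm_apply]
    simp [map_sub, ac_conjMap]
  · intro v hv
    rw [LinearMap.mem_ker] at hv
    have hpne : Complex.exp ((2*θ₁ : ℝ) * Complex.I) - 1 ≠ 0 := sub_ne_zero.2 h
    refine ⟨(0, eIm.symm (0, cc v / (Complex.exp ((2*θ₁ : ℝ) * Complex.I) - 1))), ?_⟩
    rw [Mm_apply]
    apply imQuat_ext
    · simp [map_sub, ac_conjMap, ac_symm, hv]
    · simp only [map_sub, cc_conjMap, cc_symm, map_zero, sub_zero]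
      generalize hE : Complex.exp ((2*θ₁ : ℝ) * Complex.I) = E at hpne ⊢
      field_simp

lemma ker_Dm (θ₁ θ₂ : ℝ) (h : Complex.exp ((2*θ₁ : ℝ) * Complex.I) ≠ 1) :
    LinearMap.ker (Dm θ₁ θ₂) = LinearMap.ker cc := by
  apply le_antisymm
  · intro v hv
    rw [LinearMap.mem_ker, Dm_apply, Prod.mk_eq_zero] at hv
    have h1 : cc (conjMap θ₁ v) - cc v = 0 := by rw [← map_sub, hv.1, map_zero]
    rw [cc_conjMap] at h1
    have : (Complex.exp ((2*θ₁ : ℝ) * Complex.I) - 1) * cc v = 0 := by linear_combination h1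
    rcases mul_eq_zero.1 this with h' | h'
    · exact absurd (sub_eq_zero.1 h') h
    · exact h'
  · intro v hv
    rw [LinearMap.mem_ker] at hv
    rw [LinearMap.mem_ker, Dm_apply, Prod.mk_eq_zero]
    constructor <;> rw [sub_eq_zero] <;> apply imQuat_ext <;>
      simp [ac_conjMap, cc_conjMap, hv]

lemma finrank_ker_Mm (θ₁ θ₂ : ℝ) (h : Complex.exp ((2*θ₁ : ℝ) * Complex.I) ≠ 1) :
    finrank ℝ (LinearMap.ker (Mm θ₁ θ₂)) = 4 := by
  have h1 := (Mm θ₁ θ₂).finrank_range_add_finrank_ker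
  rw [range_Mm θ₁ θ₂ h, finrank_ker_ac, Module.finrank_prod, finrank_imQuat] at h1
  omega

lemma finrank_range_Dm (θ₁ θ₂ : ℝ) (h : Complex.exp ((2*θ₁ : ℝ) * Complex.I) ≠ 1) :
    finrank ℝ (LinearMap.range (Dm θ₁ θ₂)) = 2 := by
  have h1 := (Dm θ₁ θ₂).finrank_range_add_finrank_ker
  rw [ker_Dm θ₁ θ₂ h, finrank_ker_cc, finrank_imQuat] at h1
  omega

-- swap symmetry
lemma ker_Mm_swap (θ₁ θ₂ : ℝ) :
    LinearMap.ker (Mm θ₁ θ₂) =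
      Submodule.map (LinearEquiv.prodComm ℝ ↥imQuat ↥imQuat : (imQuat × imQuat) ≃ₗ[ℝ] _).toLinearMap
        (LinearMap.ker (Mm θ₂ θ₁)) := by
  ext ⟨x, y⟩
  simp only [Submodule.mem_map, LinearMap.mem_ker]
  constructor
  · intro h
    refine ⟨(y, x), ?_, rfl⟩
    show conjMap θ₂ x - x - (conjMap θ₁ y - y) = 0
    have h' : conjMap θ₁ y - y - (conjMap θ₂ x - x) = 0 := h
    rw [show conjMap θ₂ x - x - (conjMap θ₁ y - y)
        = -(conjMap θ₁ y - y - (conjMap θ₂ x - x)) from by abel, h', neg_zero]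
  · rintro ⟨⟨a, b⟩, hab, heq⟩
    have hba : ((b, a) : imQuat × imQuat) = (x, y) := heq
    rw [Prod.ext_iff] at hba
    obtain ⟨rfl, rfl⟩ := hba
    have h' : conjMap θ₂ b - b - (conjMap θ₁ a - a) = 0 := hab
    show conjMap θ₁ a - a - (conjMap θ₂ b - b) = 0
    rw [show conjMap θ₁ a - a - (conjMap θ₂ b - b)
        = -(conjMap θ₂ b - b - (conjMap θ₁ a - a)) from by abel, h', neg_zero]

lemma finrank_ker_Mm_swap (θ₁ θ₂ : ℝ) :
    finrank ℝ (LinearMap.ker (Mm θ₁ θ₂)) = finrank ℝ (LinearMap.ker (Mm θ₂ θ₁)) := by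
  rw [ker_Mm_swap θ₁ θ₂]
  exact (LinearEquiv.finrank_eq ((LinearEquiv.prodComm ℝ imQuat imQuat).submoduleMap _)).symm

lemma range_Dm_swap (θ₁ θ₂ : ℝ) :
    LinearMap.range (Dm θ₁ θ₂) =
      Submodule.map (LinearEquiv.prodComm ℝ ↥imQuat ↥imQuat : (imQuat × imQuat) ≃ₗ[ℝ] _).toLinearMap
        (LinearMap.range (Dm θ₂ θ₁)) := by
  ext w
  simp only [Submodule.mem_map, LinearMap.mem_range]
  constructor
  · rintro ⟨v, rfl⟩
    exact ⟨Dm θ₂ θ₁ v, ⟨v, rfl⟩, rfl⟩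
  · rintro ⟨-, ⟨v, rfl⟩, rfl⟩
    exact ⟨v, rfl⟩

lemma finrank_range_Dm_swap (θ₁ θ₂ : ℝ) :
    finrank ℝ (LinearMap.range (Dm θ₁ θ₂)) = finrank ℝ (LinearMap.range (Dm θ₂ θ₁)) := by
  rw [range_Dm_swap θ₁ θ₂]
  exact (LinearEquiv.finrank_eq ((LinearEquiv.prodComm ℝ imQuat imQuat).submoduleMap _)).symm

-- trivial case
lemma Mm_eq_zero {θ₁ θ₂ : ℝ} (h1 : Complex.exp ((2*θ₁ : ℝ) * Complex.I) = 1)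
    (h2 : Complex.exp ((2*θ₂ : ℝ) * Complex.I) = 1) : Mm θ₁ θ₂ = 0 := by
  rw [Mm, conjMap_eq_id h1, conjMap_eq_id h2]
  ext x <;> simp

lemma Dm_eq_zero {θ₁ θ₂ : ℝ} (h1 : Complex.exp ((2*θ₁ : ℝ) * Complex.I) = 1)
    (h2 : Complex.exp ((2*θ₂ : ℝ) * Complex.I) = 1) : Dm θ₁ θ₂ = 0 := by
  rw [Dm, conjMap_eq_id h1, conjMap_eq_id h2]
  ext x <;> simp

lemma exp_cond (γ : ℝ) :
    Complex.exp ((2*(2*π*γ) : ℝ) * Complex.I) = 1 ↔ ∃ n : ℤ, γ = (n : ℝ)/2 := by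
  rw [Complex.exp_eq_one_iff]
  constructor
  · rintro ⟨n, hn⟩
    refine ⟨n, ?_⟩
    have hI : ((2*(2*π*γ) : ℝ) : ℂ) * Complex.I = ((n : ℂ) * (2*(π:ℂ))) * Complex.I := by
      rw [hn]; ring
    have h2 : ((2*(2*π*γ) : ℝ) : ℂ) = (n : ℂ) * (2*(π:ℂ)) := mul_right_cancel₀ Complex.I_ne_zero hI
    have h3 : (2*(2*π*γ) : ℝ) = (n : ℝ) * (2*π) := by exact_mod_cast h2
    have h4 : (2*π) * (2*γ) = (2*π) * (n : ℝ) := by linarith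
    have h5 : (2*γ : ℝ) = (n : ℝ) :=
      mul_left_cancel₀ (by positivity : (2*π : ℝ) ≠ 0) h4
    linarith
  · rintro ⟨n, rfl⟩
    refine ⟨n, ?_⟩
    push_cast
    ring


-- ===== Part C: group cohomology of ℤ² =====
noncomputable section PartC
open Multiplicative groupCohomology

-- the statement's definitions (placeholders here; in the final file these are the originals)
def ga : Multiplicative (ℤ × ℤ) := Multiplicative.ofAdd (1, 0)
def gb : Multiplicative (ℤ × ℤ) := Multiplicative.ofAdd (0, 1)

lemma decomp (g : Multiplicative (ℤ × ℤ)) :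
    ga ^ (Multiplicative.toAdd g).1 * gb ^ (Multiplicative.toAdd g).2 = g := by
  apply Multiplicative.toAdd.injective
  rw [toAdd_mul, toAdd_zpow, toAdd_zpow]
  ext
  · simp [ga, gb]
  · simp [ga, gb]

abbrev Lend := Module.End ℝ ↥imQuat

/-- Units of the endomorphism algebra act on `Multiplicative imQuat`. -/
def φmap : Lendˣ →* MulAut (Multiplicative ↥imQuat) where
  toFun u :=
    { toFun := fun v => Multiplicative.ofAdd ((u : Lend) (Multiplicative.toAdd v))
      invFun := fun v => Multiplicative.ofAdd ((↑u⁻¹ : Lend) (Multiplicative.toAdd v))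
      left_inv := fun v => by
        show Multiplicative.ofAdd (((↑u⁻¹ : Lend) * (u : Lend)) (Multiplicative.toAdd v)) = v
        rw [Units.inv_mul]
        rfl
      right_inv := fun v => by
        show Multiplicative.ofAdd (((u : Lend) * (↑u⁻¹ : Lend)) (Multiplicative.toAdd v)) = v
        rw [Units.mul_inv]
        rfl
      map_mul' := fun v w => by
        show Multiplicative.ofAdd ((u : Lend) (Multiplicative.toAdd v + Multiplicative.toAdd w)) = _
        rw [map_add]
        rfl }
  map_one' := by ext v <;> rfl
  map_mul' u w := by ext v <;> rfl

lemma φmap_apply (u : Lendˣ) (v : Multiplicative ↥imQuat) :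
    φmap u v = Multiplicative.ofAdd ((u : Lend) (Multiplicative.toAdd v)) := rfl

/-- Projection of `Multiplicative (ℤ × ℤ)` onto the two factors. -/
def e2 : Multiplicative (ℤ × ℤ) →* Multiplicative ℤ × Multiplicative ℤ where
  toFun g := (Multiplicative.ofAdd (Multiplicative.toAdd g).1,
    Multiplicative.ofAdd (Multiplicative.toAdd g).2)
  map_one' := rfl
  map_mul' _ _ := rfl

variable (α β : ℝ)

lemma rep_ρ_apply (g : Multiplicative (ℤ × ℤ)) :
    (Rep.of (conjRep α β)).ρ g = conjMap (angleOf α β g) := rfl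

lemma angle_ga : angleOf α β ga = 2*π*α := by
  simp [angleOf, ga]

lemma angle_gb : angleOf α β gb = 2*π*β := by
  simp [angleOf, gb]

/-- Evaluation of a 1-cocycle at the two generators. -/
def ev : cocycles₁ (Rep.of (conjRep α β)) →ₗ[ℝ] ↥imQuat × ↥imQuat where
  toFun f := (f ga, f gb)
  map_add' _ _ := rfl
  map_smul' _ _ := rfl

lemma cocycle_apply_mul (f : cocycles₁ (Rep.of (conjRep α β)))
    (g h : Multiplicative (ℤ × ℤ)) :
    f (g * h) = (Rep.of (conjRep α β)).ρ g (f h) + f g :=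
  (mem_cocycles₁_iff (A := Rep.of (conjRep α β)) f).1 f.2 g h

lemma cocycle_zpow_zero (f : cocycles₁ (Rep.of (conjRep α β)))
    (g : Multiplicative (ℤ × ℤ)) (h : f g = 0) (m : ℤ) : f (g ^ m) = 0 := by
  have hnat : ∀ n : ℕ, f (g ^ n) = 0 := by
    intro n
    induction n with
    | zero => rw [pow_zero]; exact cocycles₁_map_one f
    | succ n ih =>
        rw [pow_succ, cocycle_apply_mul, h, ih, map_zero, add_zero]
  rcases m with n | n
  · rw [Int.ofNat_eq_coe, zpow_natCast]; exact hnat n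
  · rw [Int.negSucc_eq, zpow_neg,
      show ((n : ℤ) + 1) = ((n + 1 : ℕ) : ℤ) from by push_cast; ring, zpow_natCast]
    have h1 := cocycles₁_map_inv f (g ^ (n + 1 : ℕ))
    rw [hnat (n+1), neg_zero] at h1
    have h2 : (Rep.of (conjRep α β)).ρ (g ^ (n + 1 : ℕ))⁻¹
        ((Rep.of (conjRep α β)).ρ (g ^ (n + 1 : ℕ)) (f (g ^ (n + 1 : ℕ))⁻¹))
        = f (g ^ (n + 1 : ℕ))⁻¹ := by
      rw [← Module.End.mul_apply, ← map_mul, inv_mul_cancel, map_one, Module.End.one_apply]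
    rw [h1, map_zero] at h2
    exact h2.symm

lemma ker_ev : LinearMap.ker (ev α β) = ⊥ := by
  rw [eq_bot_iff]
  intro f hf
  rw [LinearMap.mem_ker] at hf
  have hga : f ga = 0 := congrArg Prod.fst hf
  have hgb : f gb = 0 := congrArg Prod.snd hf
  rw [Submodule.mem_bot]
  apply Subtype.ext
  funext g
  have := decomp g
  calc (f : Multiplicative (ℤ × ℤ) → ↥imQuat) g
      = f (ga ^ (Multiplicative.toAdd g).1 * gb ^ (Multiplicative.toAdd g).2) := by rw [this]
    _ = 0 := by
        rw [cocycle_apply_mul, cocycle_zpow_zero α β f ga hga, cocycle_zpow_zero α β f gb hgb,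
          map_zero, add_zero]

lemma mem_range_ev (x y : ↥imQuat)
    (h : Mm (angleOf α β ga) (angleOf α β gb) (x, y) = 0) :
    ∃ f ∈ cocycles₁ (Rep.of (conjRep α β)), f ga = x ∧ f gb = y := by
  set ρu : Multiplicative (ℤ × ℤ) →* Lendˣ := (conjRep α β).toHomUnits with hρu
  have hρu_coe : ∀ g, ((ρu g : Lendˣ) : Lend) = conjMap (angleOf α β g) := fun g => rfl
  set pe : Multiplicative ↥imQuat ⋊[φmap] Lendˣ := ⟨Multiplicative.ofAdd x, ρu ga⟩ with hpe
  set qe : Multiplicative ↥imQuat ⋊[φmap] Lendˣ := ⟨Multiplicative.ofAdd y, ρu gb⟩ with hqe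
  have hMm : conjMap (angleOf α β ga) y - y - (conjMap (angleOf α β gb) x - x) = 0 := h
  have hcomm : Commute pe qe := by
    show pe * qe = qe * pe
    refine SemidirectProduct.ext ?_ ?_
    · show Multiplicative.ofAdd x * φmap (ρu ga) (Multiplicative.ofAdd y) =
        Multiplicative.ofAdd y * φmap (ρu gb) (Multiplicative.ofAdd x)
      rw [φmap_apply, φmap_apply]
      show Multiplicative.ofAdd (x + (ρu ga : Lend) y) = Multiplicative.ofAdd (y + (ρu gb : Lend) x)
      rw [hρu_coe, hρu_coe]
      congr 1
      have h6 := sub_eq_sub_iff_add_eq_add.1 (sub_eq_zero.1 hMm)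
      rw [add_comm x, add_comm y]
      exact h6
    · show ρu ga * ρu gb = ρu gb * ρu ga
      rw [← map_mul, ← map_mul, mul_comm ga gb]
  set F : Multiplicative (ℤ × ℤ) →* Multiplicative ↥imQuat ⋊[φmap] Lendˣ :=
    ((zpowersHom _ pe).noncommCoprod (zpowersHom _ qe)
      (fun m n => by simpa only [zpowersHom_apply] using hcomm.zpow_zpow (Multiplicative.toAdd m) (Multiplicative.toAdd n))).comp e2
    with hF
  have hFapply : ∀ g : Multiplicative (ℤ × ℤ),
      F g = pe ^ (Multiplicative.toAdd g).1 * qe ^ (Multiplicative.toAdd g).2 := by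
    intro g
    rw [hF]
    simp only [MonoidHom.comp_apply]
    rw [MonoidHom.noncommCoprod_apply]
    rfl
  have hright : ∀ g, (F g).right = ρu g := by
    intro g
    rw [hFapply]
    have h1 : (pe ^ (Multiplicative.toAdd g).1 * qe ^ (Multiplicative.toAdd g).2).right
        = SemidirectProduct.rightHom (pe ^ (Multiplicative.toAdd g).1 * qe ^ (Multiplicative.toAdd g).2) := rfl
    rw [h1, map_mul, map_zpow, map_zpow]
    show (pe.right) ^ _ * (qe.right) ^ _ = _
    rw [hpe, hqe]
    show (ρu ga) ^ _ * (ρu gb) ^ _ = _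
    rw [← map_zpow, ← map_zpow, ← map_mul, decomp]
  refine ⟨fun g => Multiplicative.toAdd (F g).left, ?_, ?_, ?_⟩
  · refine (mem_cocycles₁_iff (A := Rep.of (conjRep α β)) _).2 fun g h' => ?_
    rw [map_mul]
    show Multiplicative.toAdd ((F g).left * φmap (F g).right (F h').left) = _
    rw [hright, φmap_apply, hρu_coe]
    show Multiplicative.toAdd (F g).left + conjMap (angleOf α β g) (Multiplicative.toAdd (F h').left) = _
    rw [add_comm]
    rfl
  · show Multiplicative.toAdd (F ga).left = x
    rw [hFapply]
    norm_num [ga, gb]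
    rfl
  · show Multiplicative.toAdd (F gb).left = y
    rw [hFapply]
    norm_num [ga, gb]
    rfl

lemma range_ev :
    LinearMap.range (ev α β) = LinearMap.ker (Mm (angleOf α β ga) (angleOf α β gb)) := by
  apply le_antisymm
  · rintro - ⟨f, rfl⟩
    rw [LinearMap.mem_ker]
    show Mm _ _ (f ga, f gb) = 0
    rw [Mm_apply]
    have h1 := cocycle_apply_mul α β f ga gb
    have h2 := cocycle_apply_mul α β f gb ga
    rw [mul_comm ga gb] at h1
    have h3 := h1.symm.trans h2
    rw [sub_eq_zero, sub_eq_sub_iff_add_eq_add]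
    exact h3
  · rintro ⟨x, y⟩ h
    rw [LinearMap.mem_ker] at h
    obtain ⟨f, hf, hx, hy⟩ := mem_range_ev α β x y h
    exact ⟨⟨f, hf⟩, by rw [← hx, ← hy]; rfl⟩

lemma map_ev_coboundaries :
    Submodule.map (ev α β)
        (LinearMap.range (shortComplexH1 (Rep.of (conjRep α β))).moduleCatToCycles)
      = LinearMap.range (Dm (angleOf α β ga) (angleOf α β gb)) := by
  apply le_antisymm
  · rintro - ⟨f, hf, rfl⟩
    obtain ⟨v, rfl⟩ := hf
    exact ⟨v, rfl⟩
  · rintro - ⟨v, rfl⟩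
    refine ⟨_, ⟨v, rfl⟩, rfl⟩


lemma finrank_H1_formula :
    Module.finrank ℝ (groupCohomology.H1 (Rep.of (conjRep α β)))
      + Module.finrank ℝ (LinearMap.range (Dm (angleOf α β ga) (angleOf α β gb)))
      = Module.finrank ℝ (LinearMap.ker (Mm (angleOf α β ga) (angleOf α β gb))) := by
  have hinj : Function.Injective (ev α β) := by
    intro a b hab
    have h1 : a ga = b ga := congrArg Prod.fst hab
    have h2 : a gb = b gb := congrArg Prod.snd hab
    have hc : (⟨(a : Multiplicative (ℤ × ℤ) → ↥imQuat) - b, sub_mem a.2 b.2⟩ :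
        cocycles₁ (Rep.of (conjRep α β))) ∈ LinearMap.ker (ev α β) := by
      rw [LinearMap.mem_ker]
      show (a ga - b ga, a gb - b gb) = 0
      rw [h1, h2, sub_self, sub_self]
      rfl
    rw [ker_ev α β, Submodule.mem_bot] at hc
    exact Subtype.ext (sub_eq_zero.1 (congrArg Subtype.val hc))
  haveI : FiniteDimensional ℝ (cocycles₁ (Rep.of (conjRep α β))) :=
    FiniteDimensional.of_injective (ev α β) hinj
  have hq : Module.finrank ℝ (groupCohomology.H1 (Rep.of (conjRep α β)))
      + Module.finrank ℝ
        (LinearMap.range (shortComplexH1 (Rep.of (conjRep α β))).moduleCatToCycles)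
      = Module.finrank ℝ (cocycles₁ (Rep.of (conjRep α β))) := by
    rw [(H1Iso (Rep.of (conjRep α β))).toLinearEquiv.finrank_eq]
    haveI : Module.Finite ℝ (LinearMap.ker (shortComplexH1 (Rep.of (conjRep α β))).g.hom) := this
    exact Submodule.finrank_quotient_add_finrank _
  have h1 : Module.finrank ℝ (cocycles₁ (Rep.of (conjRep α β)))
      = Module.finrank ℝ (LinearMap.ker (Mm (angleOf α β ga) (angleOf α β gb))) := by
    rw [← range_ev α β]
    exact (LinearMap.finrank_range_of_inj hinj).symm
  have h2 : Module.finrank ℝ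
        (LinearMap.range (shortComplexH1 (Rep.of (conjRep α β))).moduleCatToCycles)
      = Module.finrank ℝ (LinearMap.range (Dm (angleOf α β ga) (angleOf α β gb))) := by
    rw [← map_ev_coboundaries α β]
    exact LinearEquiv.finrank_eq (Submodule.equivMapOfInjective (ev α β) hinj _)
  omega

end PartC

/-- the first group cohomology of `ℤ²` with coefficients in `su(2)`, where
`(m, n)` acts by the adjoint action of `u(2π(mα + nβ))`, has real dimension `2` if
`(α, β) ∉ ((1/2)ℤ)²` and real dimension `6` if `(α, β) ∈ ((1/2)ℤ)²`. -/
theorem finrank_H1_adjoint_rep (α β : ℝ) :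
    (¬ ((∃ n : ℤ, α = (n : ℝ) / 2) ∧ (∃ n : ℤ, β = (n : ℝ) / 2)) →
      Module.finrank ℝ (groupCohomology.H1 (Rep.of (conjRep α β))) = 2) ∧
    (((∃ n : ℤ, α = (n : ℝ) / 2) ∧ (∃ n : ℤ, β = (n : ℝ) / 2)) →
      Module.finrank ℝ (groupCohomology.H1 (Rep.of (conjRep α β))) = 6) := by
  have hform := finrank_H1_formula α β
  rw [angle_ga, angle_gb] at hform
  constructor
  · intro h
    rcases not_and_or.1 h with hα | hβ
    · have hA : Complex.exp ((2*(2*π*α) : ℝ) * Complex.I) ≠ 1 := fun hc => hα ((exp_cond α).1 hc)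
      rw [finrank_ker_Mm _ _ hA, finrank_range_Dm _ _ hA] at hform
      omega
    · have hB : Complex.exp ((2*(2*π*β) : ℝ) * Complex.I) ≠ 1 := fun hc => hβ ((exp_cond β).1 hc)
      rw [finrank_ker_Mm_swap, finrank_range_Dm_swap, finrank_ker_Mm _ _ hB,
        finrank_range_Dm _ _ hB] at hform
      omega
  · rintro ⟨hα, hβ⟩
    have hA : Complex.exp ((2*(2*π*α) : ℝ) * Complex.I) = 1 := (exp_cond α).2 hα
    have hB : Complex.exp ((2*(2*π*β) : ℝ) * Complex.I) = 1 := (exp_cond β).2 hβ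
    rw [Mm_eq_zero hA hB, Dm_eq_zero hA hB, LinearMap.ker_zero, LinearMap.range_zero,
      finrank_top, finrank_bot, Module.finrank_prod, finrank_imQuat] at hform
    omega
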